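/- arXiv:math/0405486 — 4 statements merged into one kernel-verified Lean document; each statement's English description precedes it below -/
import Mathlib

section
/- Let G(x) be a smooth positive definite symmetric n×n matrix on an open set Ω̃ ⊂ ℝⁿ and φ ∈ C^∞(Ω̃;ℝ). Define a(x,ξ) = ⟨G(x)ξ,ξ⟩ − ⟨G(x)φ'(x),φ'(x)⟩ and b(x,ξ) = 2⟨G(x)φ'(x),ξ⟩. Then the Poisson bracket satisfies (1/2)H_a b = 2⟨φ''|Gξ⊗Gξ⟩ + 2⟨φ''|Gφ'⊗Gφ'⟩ + 2⟨∂G|Gξ⊗φ'⊗ξ⟩ − ⟨∂G|Gφ'⊗ξ⊗ξ⟩ + ⟨∂G|Gφ'⊗φ'⊗φ'⟩. -/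
open scoped RealInnerProductSpace

noncomputable abbrev Euc (n : ℕ) := EuclideanSpace ℝ (Fin n)

/-- Poisson bracket `{a,b} = ∇_ξ a · ∇_x b − ∇_x a · ∇_ξ b`. -/
noncomputable def poisson {n : ℕ} (a b : Euc n → Euc n → ℝ) (x ξ : Euc n) : ℝ :=
  ⟪gradient (a x) ξ, gradient (fun y => b y ξ) x⟫ -
    ⟪gradient (fun y => a y ξ) x, gradient (b x) ξ⟫

open InnerProductSpace in
/-- gradient of `η ↦ ⟪Kη,η⟫` for symmetric `K` is `2Kη`. -/
lemma grad_quad {n : ℕ} (K : Euc n →L[ℝ] Euc n) (ξ : Euc n)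
    (hsym : ∀ v w : Euc n, ⟪K v, w⟫ = ⟪v, K w⟫) (c : ℝ) :
    gradient (fun η => ⟪K η, η⟫ - c) ξ = (2:ℝ) • (K ξ) := by
  apply HasGradientAt.gradient
  rw [hasGradientAt_iff_hasFDerivAt]
  have h := ((K.hasFDerivAt (x := ξ)).inner ℝ (hasFDerivAt_id ξ)).sub_const c
  refine h.congr_fderiv ?_
  ext u
  simp [fderivInnerCLM_apply, toDual_apply_apply, real_inner_smul_left, hsym u ξ,
    real_inner_comm (K ξ) u]
  ring

open InnerProductSpace in
lemma grad_lin {n : ℕ} (v : Euc n) (ξ : Euc n) :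
    gradient (fun η => 2 * ⟪v, η⟫) ξ = (2:ℝ) • v := by
  apply HasGradientAt.gradient
  rw [hasGradientAt_iff_hasFDerivAt]
  have : (fun η : Euc n => 2 * ⟪v, η⟫) = ⇑(toDual ℝ (Euc n) ((2:ℝ) • v)) := by
    ext u; simp [toDual_apply_apply, real_inner_smul_left]
  rw [this]
  exact (toDual ℝ (Euc n) ((2:ℝ) • v)).hasFDerivAt

open InnerProductSpace in
lemma inner_gradient {n : ℕ} (f : Euc n → ℝ) (x u : Euc n) :
    ⟪gradient f x, u⟫ = fderiv ℝ f x u := toDual_symm_apply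

open InnerProductSpace in
lemma inner_gradient' {n : ℕ} (f : Euc n → ℝ) (x u : Euc n) :
    ⟪u, gradient f x⟫ = fderiv ℝ f x u := by
  rw [real_inner_comm]; exact toDual_symm_apply

/-- the Poisson bracket formula for the symbols associated to a
variable metric `G` and a weight `φ`. -/
theorem stmt0 {n : ℕ} (hn : 2 ≤ n)
    (Ωt : Set (Euc n)) (hΩt : IsOpen Ωt)
    (G : Euc n → (Euc n →L[ℝ] Euc n)) (hG : ContDiffOn ℝ (⊤ : ℕ∞) G Ωt)
    (hGsym : ∀ x ∈ Ωt, ∀ v w : Euc n, ⟪G x v, w⟫ = ⟪v, G x w⟫)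
    (hGpos : ∀ x ∈ Ωt, ∀ v : Euc n, v ≠ 0 → 0 < ⟪G x v, v⟫)
    (φ : Euc n → ℝ) (hφ : ContDiffOn ℝ (⊤ : ℕ∞) φ Ωt)
    (a b : Euc n → Euc n → ℝ)
    (ha : ∀ x ξ, a x ξ = ⟪G x ξ, ξ⟫ - ⟪G x (gradient φ x), gradient φ x⟫)
    (hb : ∀ x ξ, b x ξ = 2 * ⟪G x (gradient φ x), ξ⟫)
    (x : Euc n) (hx : x ∈ Ωt) (ξ : Euc n) :
    (1 / 2) * poisson a b x ξ =
      2 * ⟪fderiv ℝ (gradient φ) x (G x ξ), G x ξ⟫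
      + 2 * ⟪fderiv ℝ (gradient φ) x (G x (gradient φ x)), G x (gradient φ x)⟫
      + 2 * ⟪(fderiv ℝ G x (G x ξ)) (gradient φ x), ξ⟫
      - ⟪(fderiv ℝ G x (G x (gradient φ x))) ξ, ξ⟫
      + ⟪(fderiv ℝ G x (G x (gradient φ x))) (gradient φ x), gradient φ x⟫ := by
  have hmem : Ωt ∈ nhds x := hΩt.mem_nhds hx
  set g : Euc n → Euc n := gradient φ with hgdef
  -- differentiability facts
  have hGd : HasFDerivAt G (fderiv ℝ G x) x :=
    ((hG.contDiffAt hmem).differentiableAt (by simp)).hasFDerivAt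
  have hgdiff : DifferentiableAt ℝ g x := by
    have hfd : ContDiffAt ℝ (⊤ : ℕ∞) (fderiv ℝ φ) x :=
      (hφ.contDiffAt hmem).fderiv_right (by simp)
    have hgeq : g = fun y => (InnerProductSpace.toDual ℝ (Euc n)).symm (fderiv ℝ φ y) := rfl
    rw [hgeq]
    exact (((InnerProductSpace.toDual ℝ (Euc n)).symm.toContinuousLinearEquiv :
      StrongDual ℝ (Euc n) ≃L[ℝ] Euc n)).differentiableAt.comp x
      (hfd.differentiableAt (by simp))
  have hgd : HasFDerivAt g (fderiv ℝ g x) x := hgdiff.hasFDerivAt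
  set K := G x with hK
  set w := g x with hw
  set D := fderiv ℝ G x with hD
  set H := fderiv ℝ g x with hH
  have hsym : ∀ v u : Euc n, ⟪K v, u⟫ = ⟪v, K u⟫ := hGsym x hx
  -- derivative of y ↦ G y (g y)
  have hGg : HasFDerivAt (fun y => G y (g y)) (K.comp H + D.flip w) x :=
    hGd.clm_apply hgd
  -- fderiv in x of b · ξ
  have hbfun : (fun y => b y ξ) = fun y => 2 * ⟪G y (g y), ξ⟫ :=
    funext fun y => hb y ξ
  have hbd : HasFDerivAt (fun y => b y ξ)
      ((2:ℝ) • ((fderivInnerCLM ℝ (K w, ξ)).comp (((K.comp H + D.flip w)).prod 0))) x := by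
    rw [hbfun]
    exact (hGg.inner ℝ (hasFDerivAt_const ξ x)).const_mul 2
  -- fderiv in x of a · ξ
  have hafun : (fun y => a y ξ) = fun y => ⟪G y ξ, ξ⟫ - ⟪G y (g y), g y⟫ :=
    funext fun y => ha y ξ
  have had : HasFDerivAt (fun y => a y ξ)
      (((fderivInnerCLM ℝ (K ξ, ξ)).comp (((K.comp (0 : Euc n →L[ℝ] Euc n) + D.flip ξ)).prod 0))
        - ((fderivInnerCLM ℝ (K w, w)).comp (((K.comp H + D.flip w)).prod H))) x := by
    rw [hafun]
    exact ((hGd.clm_apply (hasFDerivAt_const ξ x)).inner ℝ (hasFDerivAt_const ξ x)).sub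
      (hGg.inner ℝ hgd)
  -- gradients in ξ
  have gax : gradient (a x) ξ = (2:ℝ) • (K ξ) := by
    have : a x = fun η => ⟪K η, η⟫ - ⟪K w, w⟫ := funext fun η => ha x η
    rw [this]; exact grad_quad K ξ hsym _
  have gbx : gradient (b x) ξ = (2:ℝ) • (K w) := by
    have : b x = fun η => 2 * ⟪K w, η⟫ := funext fun η => hb x η
    rw [this]; exact grad_lin (K w) ξ
  -- assemble
  rw [poisson, gax, gbx, inner_gradient', inner_gradient, hbd.fderiv, had.fderiv]
  simp only [ContinuousLinearMap.smul_apply, ContinuousLinearMap.sub_apply,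
    ContinuousLinearMap.comp_apply, ContinuousLinearMap.prod_apply,
    ContinuousLinearMap.add_apply, ContinuousLinearMap.flip_apply,
    ContinuousLinearMap.zero_apply, fderivInnerCLM_apply,
    inner_zero_left, inner_zero_right, inner_add_left, inner_add_right,
    map_smul, inner_smul_left, inner_smul_right, smul_eq_mul,
    RCLike.ofReal_real_eq_id, id_eq, map_zero, zero_add, add_zero]
  rw [hsym (H (K ξ)) ξ, hsym (H (K w)) w, real_inner_comm (K w) (H (K w))]
  ring
end

section
/- Let φ be smooth with nonvanishing gradient and suppose that on ℝⁿ (n≥2), for a(x,ξ)=ξ²−|φ'(x)|², b(x,ξ)=2φ'(x)·ξ, the Poisson bracket {a,b}(x,ξ) vanishes whenever a(x,ξ)=b(x,ξ)=0. Then there exist smooth functions c(x) and ℓ(x,ξ), with ℓ linear in ξ, such that {a,b} = c(x)·a(x,ξ) + ℓ(x,ξ)·b(x,ξ) identically. -/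
open scoped RealInnerProductSpace

/-- Symbol `a(x,ξ) = ξ² − |φ'(x)|²`. -/
noncomputable def symA {n : ℕ} (φ : Euc n → ℝ) (x ξ : Euc n) : ℝ :=
  ⟪ξ, ξ⟫ - ⟪gradient φ x, gradient φ x⟫

/-- Symbol `b(x,ξ) = 2 φ'(x)·ξ`. -/
noncomputable def symB {n : ℕ} (φ : Euc n → ℝ) (x ξ : Euc n) : ℝ :=
  2 * ⟪gradient φ x, ξ⟫

open InnerProductSpace

section aux
variable {E : Type*} [NormedAddCommGroup E] [InnerProductSpace ℝ E] [CompleteSpace E]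

lemma inner_gradient_eq (f : E → ℝ) (x v : E) :
    ⟪gradient f x, v⟫ = fderiv ℝ f x v := by
  simp [gradient, toDual_symm_apply]

lemma hasGradientAt_inner_self (ξ : E) :
    HasGradientAt (fun η : E => ⟪η, η⟫) ((2:ℝ) • ξ) ξ := by
  rw [hasGradientAt_iff_hasFDerivAt]
  have h := (hasFDerivAt_id ξ).inner ℝ (hasFDerivAt_id ξ)
  refine h.congr_fderiv ?_
  ext v
  simp [real_inner_smul_left, real_inner_comm]
  ring

lemma hasGradientAt_inner_const (c ξ : E) :
    HasGradientAt (fun η : E => (2:ℝ) * ⟪c, η⟫) ((2:ℝ) • c) ξ := by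
  rw [hasGradientAt_iff_hasFDerivAt]
  have h := ((hasFDerivAt_const c ξ).inner ℝ (hasFDerivAt_id ξ)).const_mul (2:ℝ)
  refine h.congr_fderiv ?_
  ext v
  simp [real_inner_smul_left]

variable (φ : E → ℝ)

lemma grad_smooth (hφ : ContDiff ℝ (⊤ : ℕ∞) φ) : ContDiff ℝ (⊤ : ℕ∞) (gradient φ) := by
  have : gradient φ = fun y => (toDual ℝ E).symm (fderiv ℝ φ y) := rfl
  rw [this]
  exact (toDual ℝ E).symm.contDiff.comp (hφ.fderiv_right (by simp))

lemma hasFDerivAt_grad (hφ : ContDiff ℝ (⊤ : ℕ∞) φ) (x : E) :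
    HasFDerivAt (gradient φ) (fderiv ℝ (gradient φ) x) x :=
  (((grad_smooth φ hφ).differentiable (by simp)) x).hasFDerivAt

lemma H_symm (hφ : ContDiff ℝ (⊤ : ℕ∞) φ) (x u v : E) :
    ⟪fderiv ℝ (gradient φ) x u, v⟫ = ⟪fderiv ℝ (gradient φ) x v, u⟫ := by
  have hd2 : ContDiff ℝ (⊤ : ℕ∞) (fderiv ℝ φ) := hφ.fderiv_right (by simp)
  have hx : HasFDerivAt (fderiv ℝ φ) (fderiv ℝ (fderiv ℝ φ) x) x :=
    ((hd2.differentiable (by simp)) x).hasFDerivAt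
  have hcomp : HasFDerivAt (gradient φ)
      (((toDual ℝ E).symm.toContinuousLinearEquiv.toContinuousLinearMap).comp
        (fderiv ℝ (fderiv ℝ φ) x)) x := by
    have := ((toDual ℝ E).symm.toContinuousLinearEquiv.toContinuousLinearMap).hasFDerivAt.comp x hx
    exact this
  have hHeq : fderiv ℝ (gradient φ) x =
      ((toDual ℝ E).symm.toContinuousLinearEquiv.toContinuousLinearMap).comp
        (fderiv ℝ (fderiv ℝ φ) x) := hcomp.fderiv
  have hsym : fderiv ℝ (fderiv ℝ φ) x u v = fderiv ℝ (fderiv ℝ φ) x v u :=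
    (hφ.contDiffAt.isSymmSndFDerivAt (by rw [minSmoothness_of_isRCLikeNormedField]; exact WithTop.coe_le_coe.mpr (le_top : (2:ℕ∞) ≤ ⊤))) u v
  rw [hHeq]
  simp [toDual_symm_apply]
  exact hsym

lemma key (H : E →L[ℝ] E) (p : E) (hp : p ≠ 0)
    (hsymm : ∀ u v : E, ⟪H u, v⟫ = ⟪H v, u⟫)
    (h0 : ∀ ξ : E, ⟪ξ, ξ⟫ = ⟪p, p⟫ → ⟪p, ξ⟫ = 0 → ⟪H ξ, ξ⟫ = -⟪H p, p⟫) :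
    ∀ ξ : E, ⟪H ξ, ξ⟫ = -(⟪H p, p⟫ / ⟪p, p⟫) * ⟪ξ, ξ⟫
      + (2 / ⟪p, p⟫) * (⟪H p, ξ⟫ * ⟪p, ξ⟫) := by
  have hP : (⟪p, p⟫ : ℝ) ≠ 0 := fun h => hp (inner_self_eq_zero.mp h)
  have hPpos : (0:ℝ) < ⟪p, p⟫ := by
    have : ‖p‖ ≠ 0 := norm_ne_zero_iff.mpr hp
    rw [real_inner_self_eq_norm_sq]; positivity
  have hperp : ∀ w : E, ⟪p, w⟫ = 0 →
      ⟪H w, w⟫ = -(⟪H p, p⟫ / ⟪p, p⟫) * ⟪w, w⟫ := by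
    intro w hw
    rcases eq_or_ne w 0 with rfl | hw0
    · simp
    have hW : (0:ℝ) < ⟪w, w⟫ := by
      have : ‖w‖ ≠ 0 := norm_ne_zero_iff.mpr hw0
      rw [real_inner_self_eq_norm_sq]; positivity
    set s : ℝ := Real.sqrt (⟪p, p⟫ / ⟪w, w⟫) with hs
    have hs2 : s ^ 2 = ⟪p, p⟫ / ⟪w, w⟫ := by
      rw [hs, Real.sq_sqrt (le_of_lt (div_pos hPpos hW))]
    have h1 : ⟪s • w, s • w⟫ = ⟪p, p⟫ := by
      rw [real_inner_smul_left, real_inner_smul_right, ← mul_assoc, ← sq, hs2]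
      field_simp
    have h2 : ⟪p, s • w⟫ = 0 := by rw [real_inner_smul_right, hw, mul_zero]
    have h3 := h0 (s • w) h1 h2
    rw [map_smul, real_inner_smul_left, real_inner_smul_right, ← mul_assoc, ← sq, hs2] at h3
    field_simp at h3 ⊢
    linarith [h3]
  intro ξ
  set t : ℝ := ⟪p, ξ⟫ / ⟪p, p⟫ with ht
  have hw : ⟪p, ξ - t • p⟫ = 0 := by
    rw [inner_sub_right, real_inner_smul_right, ht]
    field_simp
    ring
  have h1 := hperp (ξ - t • p) hw
  have e1 : ⟪H (ξ - t • p), ξ - t • p⟫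
      = ⟪H ξ, ξ⟫ - 2 * t * ⟪H p, ξ⟫ + t ^ 2 * ⟪H p, p⟫ := by
    rw [map_sub, map_smul, inner_sub_left, inner_sub_right, inner_sub_right,
      real_inner_smul_left, real_inner_smul_left, real_inner_smul_right,
      real_inner_smul_right, hsymm ξ p]
    ring
  have e2 : ⟪ξ - t • p, ξ - t • p⟫ = ⟪ξ, ξ⟫ - 2 * t * ⟪p, ξ⟫ + t ^ 2 * ⟪p, p⟫ := by
    rw [inner_sub_left, inner_sub_right, inner_sub_right, real_inner_smul_left,
      real_inner_smul_left, real_inner_smul_right, real_inner_smul_right,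
      real_inner_comm ξ p]
    ring
  rw [e1, e2] at h1
  have htP : t * ⟪p, p⟫ = ⟪p, ξ⟫ := by rw [ht]; field_simp
  field_simp at h1 ⊢
  linear_combination h1
    + (2 * ⟪H p, ξ⟫ - 2 * t * ⟪H p, p⟫) * htP

end aux

section comp
variable {n : ℕ} (φ : Euc n → ℝ)

lemma gradA (x ξ : Euc n) : gradient (symA φ x) ξ = (2:ℝ) • ξ := by
  have h : HasGradientAt (symA φ x) ((2:ℝ) • ξ) ξ := by
    rw [hasGradientAt_iff_hasFDerivAt]
    exact ((hasGradientAt_inner_self ξ).hasFDerivAt).sub_const _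
  exact h.gradient

lemma gradB (x ξ : Euc n) : gradient (symB φ x) ξ = (2:ℝ) • gradient φ x :=
  (hasGradientAt_inner_const (gradient φ x) ξ).gradient

lemma fderivB (hφ : ContDiff ℝ (⊤ : ℕ∞) φ) (x ξ v : Euc n) :
    fderiv ℝ (fun y => symB φ y ξ) x v = 2 * ⟪fderiv ℝ (gradient φ) x v, ξ⟫ := by
  have h := ((hasFDerivAt_grad φ hφ x).inner ℝ (hasFDerivAt_const ξ x)).const_mul (2:ℝ)
  rw [show (fun y => symB φ y ξ) = fun y => 2 * ⟪gradient φ y, ξ⟫ from rfl, h.fderiv]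
  simp only [ContinuousLinearMap.coe_smul', Pi.smul_apply, ContinuousLinearMap.coe_comp',
    Function.comp_apply, fderivInnerCLM_apply, ContinuousLinearMap.prod_apply,
    ContinuousLinearMap.zero_apply, smul_eq_mul, inner_zero_right, zero_add]

lemma fderivA (hφ : ContDiff ℝ (⊤ : ℕ∞) φ) (x ξ v : Euc n) :
    fderiv ℝ (fun y => symA φ y ξ) x v
      = -(2 * ⟪fderiv ℝ (gradient φ) x v, gradient φ x⟫) := by
  have h := ((hasFDerivAt_grad φ hφ x).inner ℝ (hasFDerivAt_grad φ hφ x)).const_sub (⟪ξ, ξ⟫)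
  rw [show (fun y => symA φ y ξ)
      = fun y => ⟪ξ, ξ⟫ - ⟪gradient φ y, gradient φ y⟫ from rfl, h.fderiv]
  simp only [ContinuousLinearMap.neg_apply, ContinuousLinearMap.coe_comp', Function.comp_apply,
    fderivInnerCLM_apply, ContinuousLinearMap.prod_apply]
  rw [real_inner_comm (gradient φ x)]
  ring

lemma poisson_eq (hφ : ContDiff ℝ (⊤ : ℕ∞) φ) (x ξ : Euc n) :
    poisson (symA φ) (symB φ) x ξ =
      4 * ⟪fderiv ℝ (gradient φ) x ξ, ξ⟫
        + 4 * ⟪fderiv ℝ (gradient φ) x (gradient φ x), gradient φ x⟫ := by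
  rw [poisson, gradA, gradB,
    real_inner_smul_left, real_inner_smul_right,
    real_inner_comm (gradient (fun y => symB φ y ξ) x) ξ,
    inner_gradient_eq, inner_gradient_eq, fderivB φ hφ, fderivA φ hφ]
  ring

end comp

/-- if `{a,b}` vanishes on `a = b = 0`, then
`{a,b} = c(x) a + ℓ(x,ξ) b` with `c` smooth and `ℓ` smooth and linear in `ξ`. -/
theorem stmt2 {n : ℕ} (hn : 2 ≤ n)
    (φ : Euc n → ℝ) (hφ : ContDiff ℝ (⊤ : ℕ∞) φ)
    (hgrad : ∀ x, gradient φ x ≠ 0)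
    (hvanish : ∀ x ξ, symA φ x ξ = 0 → symB φ x ξ = 0 →
      poisson (symA φ) (symB φ) x ξ = 0) :
    ∃ c : Euc n → ℝ, ∃ ℓ : Euc n → Euc n, ContDiff ℝ (⊤ : ℕ∞) c ∧ ContDiff ℝ (⊤ : ℕ∞) ℓ ∧
      ∀ x ξ, poisson (symA φ) (symB φ) x ξ =
        c x * symA φ x ξ + ⟪ℓ x, ξ⟫ * symB φ x ξ := by
  have hg : ContDiff ℝ (⊤ : ℕ∞) (gradient φ) := grad_smooth φ hφ
  have hH : ContDiff ℝ (⊤ : ℕ∞) (fun x => fderiv ℝ (gradient φ) x) := hg.fderiv_right (by simp)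
  have hHp : ContDiff ℝ (⊤ : ℕ∞) (fun x => fderiv ℝ (gradient φ) x (gradient φ x)) :=
    hH.clm_apply hg
  have hPne : ∀ x : Euc n, (⟪gradient φ x, gradient φ x⟫ : ℝ) ≠ 0 :=
    fun x h => hgrad x (inner_self_eq_zero.mp h)
  have hPinv : ContDiff ℝ (⊤ : ℕ∞) (fun x => (⟪gradient φ x, gradient φ x⟫ : ℝ)⁻¹) :=
    (hg.inner ℝ hg).inv hPne
  refine ⟨fun x => -(4 * ⟪fderiv ℝ (gradient φ) x (gradient φ x), gradient φ x⟫)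
        * (⟪gradient φ x, gradient φ x⟫ : ℝ)⁻¹,
      fun x => ((4:ℝ) * (⟪gradient φ x, gradient φ x⟫ : ℝ)⁻¹) •
        fderiv ℝ (gradient φ) x (gradient φ x), ?_, ?_, ?_⟩
  · exact ((contDiff_const.mul (hHp.inner ℝ hg)).neg).mul hPinv
  · exact (contDiff_const.mul hPinv).smul hHp
  · intro x ξ
    have h0 : ∀ η : Euc n, ⟪η, η⟫ = ⟪gradient φ x, gradient φ x⟫ →
        ⟪gradient φ x, η⟫ = 0 →
        ⟪fderiv ℝ (gradient φ) x η, η⟫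
          = -⟪fderiv ℝ (gradient φ) x (gradient φ x), gradient φ x⟫ := by
      intro η h1 h2
      have hv := hvanish x η (by rw [symA, h1]; ring) (by rw [symB, h2]; ring)
      rw [poisson_eq φ hφ x η] at hv
      linarith
    have hk := key (fderiv ℝ (gradient φ) x) (gradient φ x) (hgrad x)
      (H_symm φ hφ x) h0 ξ
    rw [poisson_eq φ hφ x ξ, symA, symB, real_inner_smul_left]
    have hP := hPne x
    set P : ℝ := ⟪gradient φ x, gradient φ x⟫ with hPdef
    set Qp : ℝ := ⟪fderiv ℝ (gradient φ) x (gradient φ x), gradient φ x⟫ with hQpdef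
    set Q : ℝ := ⟪fderiv ℝ (gradient φ) x ξ, ξ⟫ with hQdef
    set A : ℝ := ⟪fderiv ℝ (gradient φ) x (gradient φ x), ξ⟫ with hAdef
    set S : ℝ := ⟪gradient φ x, ξ⟫ with hSdef
    set X : ℝ := ⟪ξ, ξ⟫ with hXdef
    have hinv : P * P⁻¹ = 1 := mul_inv_cancel₀ hP
    linear_combination (4 : ℝ) * hk - 4 * Qp * hinv
end

section
/- Let φ(x) = ln|x − x₀| on ℝⁿ \ {x₀}, n ≥ 2. Then φ is a limiting Carleman weight: with a(x,ξ)=ξ²−|φ'(x)|² and b(x,ξ)=2φ'(x)·ξ, one has {a,b}(x,ξ)=0 whenever a(x,ξ)=b(x,ξ)=0. -/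
open scoped RealInnerProductSpace

open InnerProductSpace

lemma hasGradientAt_of {n : ℕ} {f : Euc n → ℝ} {L : Euc n →L[ℝ] ℝ} {g x : Euc n}
    (hL : HasFDerivAt f L x) (h : ∀ v, L v = ⟪g, v⟫) : HasGradientAt f g x := by
  rw [hasGradientAt_iff_hasFDerivAt]
  have hT : toDual ℝ (Euc n) g = L := by
    ext v
    rw [toDual_apply_apply, h]
  rw [hT]; exact hL

lemma hasFDerivAt_sq {n : ℕ} (x₀ x : Euc n) :
    HasFDerivAt (fun y : Euc n => ⟪y - x₀, y - x₀⟫)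
      ((fderivInnerCLM ℝ (x - x₀, x - x₀)).comp
        ((ContinuousLinearMap.id ℝ (Euc n)).prod (ContinuousLinearMap.id ℝ (Euc n)))) x := by
  exact ((hasFDerivAt_id x).sub_const x₀).inner ℝ ((hasFDerivAt_id x).sub_const x₀)

lemma gradphi {n : ℕ} (x₀ : Euc n) {x : Euc n} (hx : x ≠ x₀) (φ : Euc n → ℝ)
    (hφ : ∀ y, φ y = Real.log ‖y - x₀‖) :
    HasGradientAt φ ((⟪x - x₀, x - x₀⟫)⁻¹ • (x - x₀)) x := by
  have hr2 : ⟪x - x₀, x - x₀⟫ ≠ 0 := by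
    rw [ne_eq, inner_self_eq_zero, sub_eq_zero]; exact hx
  have hfun : φ = fun y : Euc n => (1/2 : ℝ) * Real.log ⟪y - x₀, y - x₀⟫ := by
    funext y
    rw [hφ, real_inner_self_eq_norm_sq]
    rw [show ‖y - x₀‖^2 = ‖y - x₀‖^(2:ℕ) by norm_num, Real.log_pow]
    ring
  rw [hfun]
  have hv := hasFDerivAt_sq x₀ x
  have h2 := ((Real.hasDerivAt_log hr2).comp_hasFDerivAt x hv).const_mul (1/2 : ℝ)
  refine hasGradientAt_of h2 fun v => ?_
  simp only [ContinuousLinearMap.smul_apply, ContinuousLinearMap.coe_comp',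
    Function.comp_apply, ContinuousLinearMap.prod_apply, ContinuousLinearMap.coe_id', id_eq,
    fderivInnerCLM_apply, smul_eq_mul, real_inner_smul_left, real_inner_comm v (x - x₀)]
  ring

/-- `φ(x) = ln|x − x₀|` is a limiting Carleman weight on `ℝⁿ \ {x₀}`. -/
theorem stmt4 {n : ℕ} (hn : 2 ≤ n) (x₀ : Euc n)
    (φ : Euc n → ℝ) (hφ : ∀ x, φ x = Real.log ‖x - x₀‖) :
    ∀ x, x ≠ x₀ → ∀ ξ, symA φ x ξ = 0 → symB φ x ξ = 0 →
      poisson (symA φ) (symB φ) x ξ = 0 := by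
  intro x hx ξ hA hB
  set p : Euc n := x - x₀ with hp
  set r2 : ℝ := ⟪p, p⟫ with hr2def
  have hr2 : r2 ≠ 0 := by
    rw [hr2def, ne_eq, inner_self_eq_zero, hp, sub_eq_zero]; exact hx
  -- gradient of φ at x
  have hG : gradient φ x = r2⁻¹ • p := (gradphi x₀ hx φ hφ).gradient
  -- the neighborhood of x avoiding x₀
  have hnhds : {y : Euc n | y ≠ x₀} ∈ nhds x := by
    exact IsOpen.mem_nhds isOpen_compl_singleton hx
  -- eventual equality of symbols with explicit formulas
  have hgrad_ev : ∀ y ∈ {y : Euc n | y ≠ x₀},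
      gradient φ y = (⟪y - x₀, y - x₀⟫)⁻¹ • (y - x₀) := fun y hy =>
    (gradphi x₀ hy φ hφ).gradient
  -- ∇_ξ a = 2ξ
  have h1 : HasGradientAt (symA φ x) ((2:ℝ) • ξ) ξ := by
    have hf : HasFDerivAt (fun η : Euc n => ⟪η, η⟫ - ⟪gradient φ x, gradient φ x⟫)
        (((fderivInnerCLM ℝ (ξ, ξ)).comp
          ((ContinuousLinearMap.id ℝ (Euc n)).prod (ContinuousLinearMap.id ℝ (Euc n))))) ξ :=
      (((hasFDerivAt_id ξ).inner ℝ (hasFDerivAt_id ξ)).sub_const _)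
    refine hasGradientAt_of hf fun v => ?_
    simp only [ContinuousLinearMap.coe_comp', Function.comp_apply,
      ContinuousLinearMap.prod_apply, ContinuousLinearMap.coe_id', id_eq,
      fderivInnerCLM_apply, real_inner_smul_left, real_inner_comm v ξ]
    ring
  -- ∇_ξ b = 2 ∇φ(x)
  have h2 : HasGradientAt (symB φ x) ((2:ℝ) • gradient φ x) ξ := by
    have hf : HasFDerivAt (fun η : Euc n => 2 * ⟪gradient φ x, η⟫)
        ((2:ℝ) • ((fderivInnerCLM ℝ (gradient φ x, ξ)).comp
          ((0 : Euc n →L[ℝ] Euc n).prod (ContinuousLinearMap.id ℝ (Euc n))))) ξ :=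
      (((hasFDerivAt_const (gradient φ x) ξ).inner ℝ (hasFDerivAt_id ξ)).const_mul 2)
    refine hasGradientAt_of hf fun v => ?_
    simp only [ContinuousLinearMap.smul_apply, ContinuousLinearMap.coe_comp',
      Function.comp_apply, ContinuousLinearMap.prod_apply, ContinuousLinearMap.coe_id', id_eq,
      ContinuousLinearMap.zero_apply, fderivInnerCLM_apply, smul_eq_mul,
      inner_zero_left, real_inner_smul_left]
    ring
  -- ∇_x a = (2/r2²) p
  have h3 : HasGradientAt (fun y => symA φ y ξ) ((2 * r2⁻¹ * r2⁻¹) • p) x := by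
    have key : HasGradientAt (fun y : Euc n => ⟪ξ, ξ⟫ - (⟪y - x₀, y - x₀⟫)⁻¹)
        ((2 * r2⁻¹ * r2⁻¹) • p) x := by
      have hv := hasFDerivAt_sq x₀ x
      have hf := ((hasDerivAt_inv hr2).comp_hasFDerivAt x hv).const_sub (⟪ξ, ξ⟫)
      refine hasGradientAt_of hf fun v => ?_
      simp only [ContinuousLinearMap.neg_apply, ContinuousLinearMap.smul_apply,
        ContinuousLinearMap.coe_comp', Function.comp_apply, ContinuousLinearMap.prod_apply,
        ContinuousLinearMap.coe_id', id_eq, fderivInnerCLM_apply, smul_eq_mul,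
        real_inner_smul_left, real_inner_comm v p]
      rw [← hp]
      rw [real_inner_comm v p]
      ring
    refine key.congr_of_eventuallyEq ?_
    filter_upwards [hnhds] with y hy
    rw [show symA φ y ξ = ⟪ξ, ξ⟫ - ⟪gradient φ y, gradient φ y⟫ from rfl, hgrad_ev y hy]
    have hry : ⟪y - x₀, y - x₀⟫ ≠ 0 := by
      rw [ne_eq, inner_self_eq_zero, sub_eq_zero]; exact hy
    rw [real_inner_smul_left, real_inner_smul_right]
    field_simp
  -- ∇_x b = (2/r2) ξ − (4⟪p,ξ⟫/r2²) p
  have h4 : HasGradientAt (fun y => symB φ y ξ)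
      ((2 * r2⁻¹) • ξ + (-(4 * r2⁻¹ * r2⁻¹ * ⟪p, ξ⟫)) • p) x := by
    have key : HasGradientAt (fun y : Euc n => 2 * ((⟪y - x₀, y - x₀⟫)⁻¹ * ⟪y - x₀, ξ⟫))
        ((2 * r2⁻¹) • ξ + (-(4 * r2⁻¹ * r2⁻¹ * ⟪p, ξ⟫)) • p) x := by
      have hv := hasFDerivAt_sq x₀ x
      have hinv := (hasDerivAt_inv hr2).comp_hasFDerivAt x hv
      have hu : HasFDerivAt (fun y : Euc n => ⟪y - x₀, ξ⟫)
          ((fderivInnerCLM ℝ (p, ξ)).comp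
            ((ContinuousLinearMap.id ℝ (Euc n)).prod (0 : Euc n →L[ℝ] Euc n))) x :=
        ((hasFDerivAt_id x).sub_const x₀).inner ℝ (hasFDerivAt_const ξ x)
      have hf := (hinv.mul hu).const_mul (2:ℝ)
      refine hasGradientAt_of hf fun v => ?_
      simp only [ContinuousLinearMap.smul_apply, ContinuousLinearMap.add_apply,
        ContinuousLinearMap.coe_comp', Function.comp_apply, ContinuousLinearMap.prod_apply,
        ContinuousLinearMap.coe_id', id_eq, ContinuousLinearMap.zero_apply,
        fderivInnerCLM_apply, smul_eq_mul, inner_zero_right, real_inner_smul_left,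
        inner_add_left, real_inner_comm v p, real_inner_comm v ξ]
      rw [← hp, ← hr2def]
      rw [real_inner_comm v p]
      ring
    refine key.congr_of_eventuallyEq ?_
    filter_upwards [hnhds] with y hy
    rw [show symB φ y ξ = 2 * ⟪gradient φ y, ξ⟫ from rfl, hgrad_ev y hy,
      real_inner_smul_left]
  -- assemble
  have hpξ : ⟪p, ξ⟫ = 0 := by
    have : symB φ x ξ = 2 * (r2⁻¹ * ⟪p, ξ⟫) := by
      rw [show symB φ x ξ = 2 * ⟪gradient φ x, ξ⟫ from rfl, hG, real_inner_smul_left]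
    rw [this] at hB
    have h2' : r2⁻¹ * ⟪p, ξ⟫ = 0 := by linarith
    rcases mul_eq_zero.mp h2' with h | h
    · exact absurd h (inv_ne_zero hr2)
    · exact h
  have hξξ : ⟪ξ, ξ⟫ = r2⁻¹ := by
    have : symA φ x ξ = ⟪ξ, ξ⟫ - r2⁻¹ * (r2⁻¹ * r2) := by
      rw [show symA φ x ξ = ⟪ξ, ξ⟫ - ⟪gradient φ x, gradient φ x⟫ from rfl, hG,
        real_inner_smul_left, real_inner_smul_right, ← hr2def]
    rw [this] at hA
    field_simp at hA ⊢
    linarith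
  rw [show poisson (symA φ) (symB φ) x ξ =
    ⟪gradient (symA φ x) ξ, gradient (fun y => symB φ y ξ) x⟫ -
      ⟪gradient (fun y => symA φ y ξ) x, gradient (symB φ x) ξ⟫ from rfl,
    h1.gradient, h2.gradient, h3.gradient, h4.gradient, hG]
  rw [inner_add_right, real_inner_smul_left, real_inner_smul_left, real_inner_smul_left,
    real_inner_smul_right, real_inner_smul_right, real_inner_smul_right,
    real_inner_smul_right]
  have hpξ' : ⟪ξ, p⟫ = 0 := by rw [real_inner_comm]; exact hpξ
  rw [hpξ', hξξ, ← hr2def]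
  field_simp
  ring
end

section
/- Suppose φ is a limiting Carleman weight with nonvanishing gradient and {a,b} = c(x)a + ℓ(x,ξ)b with ℓ linear in ξ. Replace φ by φ_ε = f∘φ with f(λ) = λ + ελ²/2, and set a_ε(x,ξ) = ξ² − |φ_ε'(x)|², b_ε(x,ξ) = 2φ_ε'(x)·ξ. Then on the set a_ε(x,ξ) = b_ε(x,ξ) = 0 one has {a_ε, b_ε}(x,ξ) = 4 f''(φ(x)) (f'(φ(x)))² |φ'(x)|⁴. -/
open scoped RealInnerProductSpace

open InnerProductSpace
noncomputable def dualToVec (n : ℕ) : (Euc n →L[ℝ] ℝ) →L[ℝ] Euc n :=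
  LinearMap.mkContinuous
    { toFun := fun L => (toDual ℝ (Euc n)).symm L
      map_add' := fun a b => map_add _ a b
      map_smul' := fun r a => by
        simpa using map_smulₛₗ (toDual ℝ (Euc n)).symm.toLinearEquiv r a }
    1 (fun L => by simp)

lemma inner_dualToVec {n : ℕ} (L : Euc n →L[ℝ] ℝ) (v : Euc n) :
    ⟪dualToVec n L, v⟫ = L v := toDual_symm_apply

lemma hasGradientAt_of_hasFDerivAt {n : ℕ} {f : Euc n → ℝ} {L : Euc n →L[ℝ] ℝ} {x u : Euc n}
    (h : HasFDerivAt f L x) (hu : ∀ v, L v = ⟪u, v⟫) : HasGradientAt f u x := by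
  have hL : L = toDual ℝ (Euc n) u := by
    ext v; rw [hu v, toDual_apply_apply]
  rw [hL] at h
  simpa using h.hasGradientAt

lemma grad_convex {n : ℕ} {φ : Euc n → ℝ} (hφd : Differentiable ℝ φ)
    (ε : ℝ) (φε : Euc n → ℝ) (hφε : ∀ y, φε y = φ y + ε * (φ y) ^ 2 / 2) (y : Euc n) :
    HasGradientAt φε ((1 + ε * φ y) • gradient φ y) y := by
  have hF : ∀ z, HasFDerivAt φ (fderiv ℝ φ z) z := fun z => (hφd z).hasFDerivAt
  have hinner : ∀ z v, ⟪gradient φ z, v⟫ = fderiv ℝ φ z v := fun z v => toDual_symm_apply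
  have h1 := (hF y).add (((hF y).mul (hF y)).const_mul (ε / 2))
  rw [show φε = fun z => φ z + ε / 2 * (φ z * φ z) from
    funext fun z => by rw [hφε z]; ring]
  refine hasGradientAt_of_hasFDerivAt h1 ?_
  intro v
  simp only [ContinuousLinearMap.add_apply, ContinuousLinearMap.coe_smul', Pi.smul_apply,
    ContinuousLinearMap.smul_apply, smul_eq_mul]
  rw [real_inner_smul_left]
  simp only [hinner]
  ring

lemma poisson_formula {n : ℕ} {φ : Euc n → ℝ} (hφ : ContDiff ℝ (⊤ : ℕ∞) φ)
    (ε : ℝ) (φε : Euc n → ℝ) (hφε : ∀ y, φε y = φ y + ε * (φ y) ^ 2 / 2) (x ξ : Euc n) :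
    poisson (symA φε) (symB φε) x ξ =
      4 * (1 + ε * φ x) * fderiv ℝ (fderiv ℝ φ) x ξ ξ
      + 4 * ε * ⟪gradient φ x, ξ⟫ ^ 2
      + 4 * (1 + ε * φ x) ^ 3 * fderiv ℝ (fderiv ℝ φ) x (gradient φ x) (gradient φ x)
      + 4 * ε * (1 + ε * φ x) ^ 2 * ⟪gradient φ x, gradient φ x⟫ ^ 2 := by
  have hφd : Differentiable ℝ φ := hφ.differentiable (by simp)
  have hF : ∀ y, HasFDerivAt φ (fderiv ℝ φ y) y := fun y => (hφd y).hasFDerivAt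
  have hinner : ∀ y v, ⟪gradient φ y, v⟫ = fderiv ℝ φ y v := fun y v => toDual_symm_apply
  have hφε_grad : ∀ y, HasGradientAt φε ((1 + ε * φ y) • gradient φ y) y :=
    grad_convex hφd ε φε hφε
  have hMg : ∀ y, gradient φε y = (1 + ε * φ y) • gradient φ y := fun y => (hφε_grad y).gradient
  have hBd : HasFDerivAt (fderiv ℝ φ) (fderiv ℝ (fderiv ℝ φ) x) x := by
    have h2 : ContDiff ℝ 1 (fderiv ℝ φ) := hφ.fderiv_right (WithTop.coe_le_coe.mpr le_top)
    exact (h2.differentiable one_ne_zero x).hasFDerivAt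
  set B := fderiv ℝ (fderiv ℝ φ) x with hBdef
  have hsym : ∀ u v, B u v = B v u := second_derivative_symmetric hF hBd
  have hD : HasFDerivAt (gradient φ) ((dualToVec n).comp B) x :=
    ((dualToVec n).hasFDerivAt (x := fderiv ℝ φ x)).comp x hBd
  set D := (dualToVec n).comp B with hDdef
  have hDv : ∀ v w, ⟪D v, w⟫ = B v w := fun v w => inner_dualToVec _ _
  set g := gradient φ x with hg
  set μ := 1 + ε * φ x with hμ
  set M' := μ • D + (ε • fderiv ℝ φ x).smulRight g with hM'def
  have hM : HasFDerivAt (fun y => (1 + ε * φ y) • gradient φ y) M' x :=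
    (((hF x).const_mul ε).const_add 1).smul hD
  have hM'v : ∀ v w, ⟪M' v, w⟫ = μ * B v w + ε * ⟪g, v⟫ * ⟪g, w⟫ := by
    intro v w
    rw [hM'def]
    simp only [ContinuousLinearMap.add_apply, ContinuousLinearMap.coe_smul', Pi.smul_apply,
      ContinuousLinearMap.smulRight_apply, ContinuousLinearMap.smul_apply, smul_eq_mul]
    rw [inner_add_left, real_inner_smul_left, real_inner_smul_left, hDv, hμ]
    simp only [hg, hinner]
    try ring
  have hG1 : gradient (symA φε x) ξ = (2 : ℝ) • ξ := by
    refine HasGradientAt.gradient ?_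
    refine hasGradientAt_of_hasFDerivAt
      (f := fun η : Euc n => ⟪η, η⟫ - ⟪gradient φε x, gradient φε x⟫)
      (((hasFDerivAt_id ξ).inner ℝ (hasFDerivAt_id ξ)).sub_const _) ?_
    intro v
    simp only [ContinuousLinearMap.comp_apply, ContinuousLinearMap.prod_apply,
      ContinuousLinearMap.coe_id', id_eq, fderivInnerCLM_apply]
    rw [real_inner_smul_left, real_inner_comm v ξ]
    ring
  have hG2 : gradient (symB φε x) ξ = (2 * μ) • g := by
    refine HasGradientAt.gradient ?_
    refine hasGradientAt_of_hasFDerivAt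
      (f := fun η : Euc n => 2 * ⟪gradient φε x, η⟫)
      (((hasFDerivAt_const (gradient φε x) ξ).inner ℝ (hasFDerivAt_id ξ)).const_mul 2) ?_
    intro v
    simp only [ContinuousLinearMap.smul_apply, ContinuousLinearMap.comp_apply,
      ContinuousLinearMap.prod_apply, ContinuousLinearMap.coe_id', id_eq,
      ContinuousLinearMap.zero_apply, fderivInnerCLM_apply, inner_zero_left, smul_eq_mul]
    rw [hMg x, real_inner_smul_left, real_inner_smul_left]
    ring
  have hG3 : gradient (fun y => symB φε y ξ) x = (2 * μ) • D ξ + (2 * ε * ⟪g, ξ⟫) • g := by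
    refine HasGradientAt.gradient ?_
    have hfun : (fun y => symB φε y ξ) = fun y => 2 * ⟪(1 + ε * φ y) • gradient φ y, ξ⟫ := by
      funext y; rw [symB, hMg y]
    rw [hfun]
    refine hasGradientAt_of_hasFDerivAt ((hM.inner ℝ (hasFDerivAt_const ξ x)).const_mul 2) ?_
    intro v
    simp only [ContinuousLinearMap.smul_apply, ContinuousLinearMap.comp_apply,
      ContinuousLinearMap.prod_apply, ContinuousLinearMap.zero_apply, fderivInnerCLM_apply,
      inner_zero_right, smul_eq_mul]
    rw [hM'v v ξ, inner_add_left, real_inner_smul_left, real_inner_smul_left, hDv, hsym ξ v]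
    ring
  have hG4 : gradient (fun y => symA φε y ξ) x
      = (-(2 * μ ^ 2)) • D g + (-(2 * ε * μ * ⟪g, g⟫)) • g := by
    refine HasGradientAt.gradient ?_
    have hfun : (fun y => symA φε y ξ)
        = fun y => ⟪ξ, ξ⟫ - ⟪(1 + ε * φ y) • gradient φ y, (1 + ε * φ y) • gradient φ y⟫ := by
      funext y; rw [symA, hMg y]
    rw [hfun]
    refine hasGradientAt_of_hasFDerivAt ((hM.inner ℝ hM).const_sub _) ?_
    intro v
    simp only [ContinuousLinearMap.neg_apply, ContinuousLinearMap.comp_apply,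
      ContinuousLinearMap.prod_apply, fderivInnerCLM_apply]
    have h1 : ⟪μ • g, M' v⟫ = μ * (μ * B v g + ε * ⟪g, v⟫ * ⟪g, g⟫) := by
      rw [real_inner_comm, real_inner_smul_right, hM'v]
    have h2 : ⟪M' v, μ • g⟫ = μ * (μ * B v g + ε * ⟪g, v⟫ * ⟪g, g⟫) := by
      rw [real_inner_smul_right, hM'v]
    rw [h1, h2, inner_add_left, real_inner_smul_left, real_inner_smul_left, hDv, hsym g v]
    ring
  rw [poisson, hG1, hG2, hG3, hG4]
  rw [inner_add_right, inner_add_left, real_inner_smul_left, real_inner_smul_left,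
    real_inner_smul_left, real_inner_smul_left, real_inner_smul_right, real_inner_smul_right,
    real_inner_smul_right, real_inner_smul_right]
  rw [real_inner_comm (D ξ) ξ, real_inner_comm g ξ, hDv, hDv]
  ring

/-- convexified weight `φ_ε = φ + εφ²/2`.  On the joint zero set of
`a_ε, b_ε` the Poisson bracket equals `4 f''(φ) f'(φ)² |φ'|⁴` with
`f'(λ) = 1 + ελ`, `f''(λ) = ε`. -/
theorem stmt6 {n : ℕ} (hn : 2 ≤ n)
    (φ : Euc n → ℝ) (hφ : ContDiff ℝ (⊤ : ℕ∞) φ)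
    (hgrad : ∀ x, gradient φ x ≠ 0)
    (c : Euc n → ℝ) (ℓ : Euc n → Euc n) (hc : ContDiff ℝ (⊤ : ℕ∞) c) (hℓ : ContDiff ℝ (⊤ : ℕ∞) ℓ)
    (hdecomp : ∀ x ξ, poisson (symA φ) (symB φ) x ξ =
      c x * symA φ x ξ + ⟪ℓ x, ξ⟫ * symB φ x ξ)
    (ε : ℝ) (hε0 : 0 ≤ ε) (hε1 : ε < 1)
    (φε : Euc n → ℝ) (hφε : ∀ x, φε x = φ x + ε * (φ x) ^ 2 / 2) :
    ∀ x ξ, symA φε x ξ = 0 → symB φε x ξ = 0 →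
      poisson (symA φε) (symB φε) x ξ =
        4 * ε * (1 + ε * φ x) ^ 2 * ‖gradient φ x‖ ^ 4 := by
  intro x ξ hA hB
  have hφd : Differentiable ℝ φ := hφ.differentiable (by simp)
  set g := gradient φ x with hg
  set B := fderiv ℝ (fderiv ℝ φ) x with hBdef
  set μ := 1 + ε * φ x with hμ
  have hMg : gradient φε x = μ • g := (grad_convex hφd ε φε hφε x).gradient
  rw [symA, hMg] at hA
  rw [symB, hMg] at hB
  rw [real_inner_smul_left, real_inner_smul_right] at hA
  rw [real_inner_smul_left] at hB
  have hA' : ⟪ξ, ξ⟫ = μ ^ 2 * ⟪g, g⟫ := by nlinarith [hA]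
  have hB' : μ * ⟪g, ξ⟫ = 0 := by linarith [hB]
  have hnorm : ‖g‖ ^ 4 = ⟪g, g⟫ ^ 2 := by
    rw [real_inner_self_eq_norm_sq]; ring
  rw [poisson_formula hφ ε φε hφε x ξ, ← hg, ← hμ, ← hBdef, hnorm]
  by_cases hμ0 : μ = 0
  · have hξ : ξ = 0 := by
      rw [← inner_self_eq_zero (𝕜 := ℝ) (x := ξ)]
      rw [hA', hμ0]; ring
    rw [hξ, hμ0]
    simp
  · have hgξ : ⟪g, ξ⟫ = 0 := by
      rcases mul_eq_zero.mp hB' with h | h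
      · exact absurd h hμ0
      · exact h
    obtain ⟨η, hξη⟩ : ∃ η, ξ = μ • η :=
      ⟨μ⁻¹ • ξ, by rw [smul_smul, mul_inv_cancel₀ hμ0, one_smul]⟩
    have hP0 := poisson_formula hφ 0 φ (fun y => by ring) x η
    rw [hdecomp x η, symA, symB, ← hg, ← hBdef] at hP0
    have hηη : ⟪η, η⟫ = ⟪g, g⟫ := by
      refine mul_left_cancel₀ (pow_ne_zero 2 hμ0) ?_
      have h9 : ⟪ξ, ξ⟫ = μ * (μ * ⟪η, η⟫) := by
        rw [hξη, real_inner_smul_left, real_inner_smul_right]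
      rw [← hA', h9]
      ring
    have hgη : ⟪g, η⟫ = 0 := by
      have h8 : μ * ⟪g, η⟫ = 0 := by
        rw [← real_inner_smul_right, ← hξη]; exact hgξ
      exact (mul_eq_zero.mp h8).resolve_left hμ0
    rw [hηη, hgη] at hP0
    have hkey : B η η + B g g = 0 := by linear_combination (-1/4 : ℝ) * hP0
    have hBξ : B ξ ξ = μ ^ 2 * B η η := by
      rw [hξη]
      simp only [map_smul, ContinuousLinearMap.smul_apply, smul_eq_mul]
      ring
    rw [hBξ, hgξ]
    linear_combination (4 * μ ^ 3 : ℝ) * hkey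
end
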